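/- arXiv:1103.2322 — 2 statements merged into one kernel-verified Lean document; each statement's English description precedes it below -/
import Mathlib

section
/- Let (Ω, 𝔉, P) be a probability space. For each t > 0 let μ_t : Ω → M(ℝ) be a random locally finite Borel measure on ℝ and X_t : Ω → ℝ a random variable, and let (μ, X) be a further such pair. Assume: (i) for every bounded continuous f, h : ℝ → ℝ and every continuous compactly supported φ : ℝ → ℝ, E[f(∫ φ dμ_t)·h(X_t)] → E[f(∫ φ dμ)·h(X)] as t → ∞; (ii) for every compact C ⊆ ℝ, sup_t E[μ_t(C)] < ∞ and E[μ(C)] < ∞. Then for every continuous compactly supported φ : ℝ → ℝ and every bounded continuous g : ℝ → ℝ, E[g(∫ φ(y+X_t) μ_t(dy))] → E[g(∫ φ(y+X) μ(dy))] as t → ∞. -/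
open MeasureTheory Filter Topology Metric
open scoped ENNReal NNReal BoundedContinuousFunction

/-!
Fix a large radius `R`. A partition of unity `(ρ_p)` on the ball of radius `R`, subordinate to
small balls around finitely many points `p`, gives
`g (∫ φ (y + x) dm) ≈ ∑_p g (∫ φ (y + p) dm) ρ_p x` for `‖x‖ ≤ R`, uniformly over all measures `m`
of bounded mass on a fixed compact set (uniform continuity of `φ`, and of `g` on a compact
interval). Each summand, evaluated at `(μ_t, X_t)`, has the form `E[f(∫ψ dμ_t) h(X_t)]` and
converges by hypothesis. The error is small outside an event of small probability, uniformly in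
`t`: `‖X_t‖ > R` is controlled by tightness of `(X_t)`, which follows from the convergence
hypothesis with `f = 1`, and a large mass of `μ_t` by Markov's inequality and the moment bound.
-/

lemma tendsto_of_forall_eventually_dist_le {α β : Type*} [PseudoMetricSpace β] {l : Filter α}
    {a : α → β} {a₀ : β}
    (h : ∀ ε > 0, ∃ (b : α → β) (b₀ : β), Tendsto b l (𝓝 b₀) ∧
      (∀ᶠ t in l, dist (a t) (b t) ≤ ε) ∧ dist a₀ b₀ ≤ ε) :
    Tendsto a l (𝓝 a₀) := by
  refine Metric.tendsto_nhds.2 fun ε hε => ?_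
  obtain ⟨b, b₀, hb, hab, hab₀⟩ := h (ε / 4) (by positivity)
  filter_upwards [hab, Metric.tendsto_nhds.1 hb (ε / 4) (by positivity)] with t h₁ h₂
  calc dist (a t) a₀ ≤ dist (a t) (b t) + dist (b t) b₀ + dist b₀ a₀ := dist_triangle4 _ _ _ _
    _ < ε := by rw [dist_comm b₀]; linarith

lemma norm_integral_le_add_mul_measureReal {Ω F : Type*} [MeasurableSpace Ω]
    [NormedAddCommGroup F] [NormedSpace ℝ F] {P : Measure Ω} [IsProbabilityMeasure P]
    {f : Ω → F} {T : Set Ω} (hT : MeasurableSet T) {ε B : ℝ} (hε : 0 ≤ ε)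
    (hgood : ∀ ω ∉ T, ‖f ω‖ ≤ ε) (hB : ∀ ω, ‖f ω‖ ≤ B) :
    ‖∫ ω, f ω ∂P‖ ≤ ε + B * P.real T := by
  have hbound : ∀ ω, ‖f ω‖ ≤ ε + T.indicator (fun _ => B) ω := fun ω => by
    by_cases hω : ω ∈ T
    · rw [Set.indicator_of_mem hω]; linarith [hB ω]
    · rw [Set.indicator_of_notMem hω, add_zero]; exact hgood ω hω
  calc ‖∫ ω, f ω ∂P‖ ≤ ∫ ω, ε + T.indicator (fun _ => B) ω ∂P :=
        norm_integral_le_of_norm_le ((integrable_const ε).add ((integrable_const B).indicator hT))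
          (ae_of_all _ hbound)
    _ = ε + B * P.real T := by
        rw [integral_add (integrable_const ε) ((integrable_const B).indicator hT),
          integral_indicator_const _ hT]
        simp [mul_comm]

lemma norm_integral_le_of_forall_notMem_eq_zero {α F : Type*} [MeasurableSpace α]
    [NormedAddCommGroup F] [NormedSpace ℝ F] {m : Measure α} {f : α → F} {C : Set α}
    (hC : m C < ∞) (hf : ∀ y ∉ C, f y = 0) {b : ℝ} (hb : ∀ y ∈ C, ‖f y‖ ≤ b) :
    ‖∫ y, f y ∂m‖ ≤ b * m.real C := by
  rw [← setIntegral_eq_integral_of_forall_compl_eq_zero hf]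
  exact norm_setIntegral_le_of_norm_le_const hC hb

section Probability

variable {Ω : Type*} [MeasurableSpace Ω] (P : Measure Ω)

lemma eventually_forall_measureReal_le_le {ι : Type*} {Z : ι → Ω → ℝ≥0∞}
    (hZ : ∀ i, AEMeasurable (Z i) P) {M : ℝ≥0∞} (hM : M ≠ ∞) (hZM : ∀ i, ∫⁻ ω, Z i ω ∂P ≤ M)
    {ε : ℝ} (hε : 0 < ε) :
    ∀ᶠ A : ℝ≥0 in atTop, ∀ i, P.real {ω | (A : ℝ≥0∞) ≤ Z i ω} ≤ ε := by
  have hlim : Tendsto (fun A : ℝ≥0 => M / A) atTop (𝓝 0) := by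
    have hinv : Tendsto (fun A : ℝ≥0 => (A : ℝ≥0∞)⁻¹) atTop (𝓝 0) := by
      rw [← ENNReal.inv_top]
      exact tendsto_inv_iff.2 (ENNReal.tendsto_coe_nhds_top.2 tendsto_id)
    simpa [div_eq_mul_inv] using ENNReal.Tendsto.const_mul hinv (Or.inr hM)
  filter_upwards [hlim.eventually (gt_mem_nhds (ENNReal.ofReal_pos.2 hε)),
    eventually_gt_atTop 0] with A hA hA₀ i
  refine ENNReal.toReal_le_of_le_ofReal hε.le ?_
  calc P {ω | (A : ℝ≥0∞) ≤ Z i ω} ≤ (∫⁻ ω, Z i ω ∂P) / A :=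
        meas_ge_le_lintegral_div (hZ i) (by exact_mod_cast hA₀.ne') ENNReal.coe_ne_top
    _ ≤ M / A := by gcongr; exact hZM i
    _ ≤ ENNReal.ofReal ε := hA.le

variable [IsFiniteMeasure P]

lemma exists_measureReal_lt_le {Z : Ω → ℝ} (hZ : Measurable Z) {ε : ℝ}
    (hε : 0 < ε) : ∃ R, P.real {ω | R < Z ω} ≤ ε := by
  have hanti : Antitone fun r : ℝ => {ω | r < Z ω} := fun r r' h ω hω => h.trans_lt hω
  have hempty : ⋂ r : ℝ, {ω | r < Z ω} = ∅ :=
    Set.eq_empty_of_forall_notMem fun ω hω => lt_irrefl (Z ω) (Set.mem_iInter.1 hω (Z ω))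
  have hlim := tendsto_measure_iInter_atTop
    (fun r => (measurableSet_lt measurable_const hZ).nullMeasurableSet) hanti
    ⟨0, measure_ne_top P _⟩
  rw [hempty, measure_empty] at hlim
  obtain ⟨R, hR⟩ := (hlim.eventually (gt_mem_nhds (ENNReal.ofReal_pos.2 hε))).exists
  exact ⟨R, ENNReal.toReal_le_of_le_ofReal hε.le hR.le⟩

variable {E : Type*} [NormedAddCommGroup E] [MeasurableSpace E] [BorelSpace E]

lemma BoundedContinuousFunction.integrable_comp (f : E →ᵇ ℝ) {X : Ω → E} (hX : Measurable X) :
    Integrable (fun ω => f (X ω)) P :=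
  Integrable.of_bound (f.continuous.measurable.comp hX).aestronglyMeasurable ‖f‖
    (ae_of_all _ fun _ => f.norm_coe_le_norm _)

lemma exists_eventually_measureReal_lt_norm_le {α : Type*} {l : Filter α} {X : α → Ω → E}
    {Y : Ω → E} (hX : ∀ a, Measurable (X a)) (hY : Measurable Y)
    (hconv : ∀ h : E →ᵇ ℝ, Tendsto (fun a => ∫ ω, h (X a ω) ∂P) l (𝓝 (∫ ω, h (Y ω) ∂P)))
    {ε : ℝ} (hε : 0 < ε) :
    ∃ R, (∀ᶠ a in l, P.real {ω | R < ‖X a ω‖} ≤ ε) ∧ P.real {ω | R < ‖Y ω‖} ≤ ε := by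
  obtain ⟨R, hR⟩ := exists_measureReal_lt_le P hY.norm (half_pos hε)
  obtain ⟨χ, hχ₀, hχ₁, hχ⟩ := exists_bounded_zero_one_of_closed
    (isClosed_closedBall : IsClosed (closedBall (0 : E) R))
    (isClosed_le continuous_const continuous_norm : IsClosed {x : E | R + 1 ≤ ‖x‖})
    (Set.disjoint_left.2 fun x hx hx' => by
      simp only [mem_closedBall_zero_iff, Set.mem_ofPred_eq] at hx hx'
      linarith)
  have hχY : ∫ ω, χ (Y ω) ∂P ≤ ε / 2 := by
    have hYR : MeasurableSet {ω | R < ‖Y ω‖} := measurableSet_lt measurable_const hY.norm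
    calc ∫ ω, χ (Y ω) ∂P ≤ ∫ ω, {ω | R < ‖Y ω‖}.indicator 1 ω ∂P := by
          refine integral_mono (χ.integrable_comp P hY) ((integrable_const 1).indicator hYR)
            fun ω => ?_
          by_cases h : R < ‖Y ω‖
          · simpa [Set.indicator_of_mem (show ω ∈ {ω | R < ‖Y ω‖} from h)] using (hχ _).2
          · simp [Set.indicator_of_notMem (show ω ∉ {ω | R < ‖Y ω‖} from h),
              hχ₀ (mem_closedBall_zero_iff.2 (not_lt.1 h))]
      _ = P.real {ω | R < ‖Y ω‖} := integral_indicator_one hYR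
      _ ≤ ε / 2 := hR
  refine ⟨R + 1, ?_, (measureReal_mono fun ω (hω : R + 1 < ‖Y ω‖) => ?_).trans
    (hR.trans (half_le_self hε.le))⟩
  · filter_upwards [(hconv χ).eventually (gt_mem_nhds (hχY.trans_lt (half_lt_self hε)))]
      with a ha
    calc P.real {ω | R + 1 < ‖X a ω‖} ≤ P.real {ω | 1 ≤ χ (X a ω)} :=
          measureReal_mono fun ω (hω : R + 1 < ‖X a ω‖) => (hχ₁ (Set.mem_ofPred.2 hω.le)).ge
      _ ≤ ∫ ω, χ (X a ω) ∂P := by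
          simpa using mul_meas_ge_le_integral_of_nonneg (ae_of_all _ fun ω => (hχ (X a ω)).1)
            (χ.integrable_comp P (hX a)) 1
      _ ≤ ε := ha.le
  · show R < ‖Y ω‖
    linarith

end Probability

namespace PartitionOfUnity

variable {ι X : Type*} [TopologicalSpace X] {s : Set X} (ρ : PartitionOfUnity ι X s)

def toBoundedContinuousFunction (i : ι) : X →ᵇ ℝ :=
  BoundedContinuousFunction.mkOfBound (ρ i) 1 fun x y =>
    Real.dist_le_of_mem_Icc_01 ⟨ρ.nonneg i x, ρ.le_one i x⟩ ⟨ρ.nonneg i y, ρ.le_one i y⟩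

variable [Fintype ι]

lemma abs_sum_mul_le {f : ι → ℝ} {B : ℝ} (hf : ∀ i, |f i| ≤ B) (hB : 0 ≤ B) (x : X) :
    |∑ i, f i * ρ i x| ≤ B := by
  calc |∑ i, f i * ρ i x| ≤ ∑ i, B * ρ i x := by
        refine (Finset.abs_sum_le_sum_abs _ _).trans (Finset.sum_le_sum fun i _ => ?_)
        rw [abs_mul, abs_of_nonneg (ρ.nonneg i x)]
        exact mul_le_mul_of_nonneg_right (hf i) (ρ.nonneg i x)
    _ ≤ B := by
        rw [← Finset.mul_sum, ← finsum_eq_sum_of_fintype]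
        exact mul_le_of_le_one_right hB (ρ.sum_le_one x)

lemma abs_sub_sum_mul_le {U : ι → Set X} (hρ : ρ.IsSubordinate U) {f : X → ℝ} {p : ι → X}
    {ε : ℝ} (hf : ∀ i, ∀ y ∈ U i, |f y - f (p i)| ≤ ε) {x : X} (hx : x ∈ s) :
    |f x - ∑ i, f (p i) * ρ i x| ≤ ε := by
  have hmem := ρ.finsum_smul_mem_convex (g := fun i _ => f (p i)) (t := closedBall (f x) ε) hx
    (fun i hi => by
      rw [mem_closedBall, Real.dist_eq, abs_sub_comm]
      exact hf i x (hρ i (subset_tsupport _ hi)))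
    (convex_closedBall _ _)
  rw [finsum_eq_sum_of_fintype, mem_closedBall, Real.dist_eq, abs_sub_comm] at hmem
  simpa only [smul_eq_mul, mul_comm] using hmem

lemma abs_integral_sub_sum_integral_mul_le {Ω : Type*} [MeasurableSpace Ω] (P : Measure Ω)
    [IsProbabilityMeasure P] {U : ι → Set X} (hρ : ρ.IsSubordinate U) (p : ι → X)
    {F : Ω → X → ℝ} {x : Ω → X} (hFx : AEStronglyMeasurable (fun ω => F ω (x ω)) P)
    (hFp : ∀ i, AEStronglyMeasurable (fun ω => F ω (p i) * ρ i (x ω)) P) {B ε : ℝ}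
    (hB : ∀ ω c, |F ω c| ≤ B) (hε : 0 ≤ ε) {T : Set Ω} (hT : MeasurableSet T)
    (hgood : ∀ ω ∉ T, x ω ∈ s ∧ ∀ i, ∀ c ∈ U i, |F ω c - F ω (p i)| ≤ ε) :
    |∫ ω, F ω (x ω) ∂P - ∑ i, ∫ ω, F ω (p i) * ρ i (x ω) ∂P| ≤ ε + 2 * B * P.real T := by
  have hint : ∀ i, Integrable (fun ω => F ω (p i) * ρ i (x ω)) P := fun i =>
    Integrable.of_bound (hFp i) B (ae_of_all _ fun ω => by
      rw [Real.norm_eq_abs, abs_mul, abs_of_nonneg (ρ.nonneg i _)]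
      exact (mul_le_of_le_one_right (abs_nonneg _) (ρ.le_one i _)).trans (hB ω _))
  rw [← integral_finsetSum _ fun i _ => hint i,
    ← integral_sub (Integrable.of_bound hFx B (ae_of_all _ fun ω => hB ω _))
      (integrable_finsetSum _ fun i _ => hint i), ← Real.norm_eq_abs]
  refine norm_integral_le_add_mul_measureReal hT hε (fun ω hω => ?_) fun ω => ?_
  · exact ρ.abs_sub_sum_mul_le hρ (hgood ω hω).2 (hgood ω hω).1
  · have hB₀ : 0 ≤ B := (abs_nonneg _).trans (hB ω (x ω))
    calc ‖F ω (x ω) - ∑ i, F ω (p i) * ρ i (x ω)‖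
        ≤ |F ω (x ω)| + |∑ i, F ω (p i) * ρ i (x ω)| := abs_sub _ _
      _ ≤ B + B := add_le_add (hB ω _) (ρ.abs_sum_mul_le (fun i => hB ω (p i)) hB₀ _)
      _ = 2 * B := by ring

end PartitionOfUnity

lemma IsCompact.exists_partitionOfUnity_isSubordinate_ball {X : Type*} [MetricSpace X]
    {s : Set X} (hs : IsCompact s) {δ : ℝ} (hδ : 0 < δ) :
    ∃ (t : Finset X) (ρ : PartitionOfUnity t X s), (∀ p ∈ t, p ∈ s) ∧
      ρ.IsSubordinate fun p => ball (p : X) δ := by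
  obtain ⟨t, hts, hcover⟩ := hs.elim_nhds_subcover (fun p => ball p δ) fun p _ => ball_mem_nhds p hδ
  obtain ⟨ρ, hρ⟩ := PartitionOfUnity.exists_isSubordinate hs.isClosed (fun p : t => ball (p : X) δ)
    (fun _ => isOpen_ball) (by simpa [Set.iUnion_subtype] using hcover)
  exact ⟨t, ρ, hts, hρ⟩

lemma apply_add_eq_zero_of_notMem_closedBall {E F : Type*} [SeminormedAddCommGroup E] [Zero F]
    {φ : E → F} {K L : ℝ} (hK : tsupport φ ⊆ closedBall 0 K) {c y : E} (hc : ‖c‖ ≤ L)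
    (hy : y ∉ closedBall 0 (K + L)) : φ (y + c) = 0 := by
  refine image_eq_zero_of_notMem_tsupport fun hyc => hy ?_
  have := mem_closedBall_zero_iff.1 (hK hyc)
  rw [mem_closedBall_zero_iff]
  calc ‖y‖ = ‖(y + c) - c‖ := by rw [add_sub_cancel_right]
    _ ≤ ‖y + c‖ + ‖c‖ := norm_sub_le _ _
    _ ≤ K + L := add_le_add this hc

section Translate

variable {E : Type*} [NormedAddCommGroup E] [ProperSpace E] [MeasurableSpace E] [BorelSpace E]
  {φ : E → ℝ}

lemma continuous_integral_comp_add (m : Measure E) [IsLocallyFiniteMeasure m]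
    (hφ : Continuous φ) (hφc : HasCompactSupport φ) :
    Continuous fun c => ∫ y, φ (y + c) ∂m := by
  obtain ⟨K, hK⟩ := hφc.isBounded.subset_closedBall 0
  refine continuous_iff_continuousAt.2 fun c₀ => ?_
  have hrestrict : (fun c => ∫ y in closedBall 0 (K + (‖c₀‖ + 1)), φ (y + c) ∂m)
      =ᶠ[𝓝 c₀] fun c => ∫ y, φ (y + c) ∂m := by
    filter_upwards [closedBall_mem_nhds c₀ one_pos] with c hc
    refine setIntegral_eq_integral_of_forall_compl_eq_zero fun y hy =>
      apply_add_eq_zero_of_notMem_closedBall hK ?_ hy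
    calc ‖c‖ ≤ ‖c₀‖ + ‖c - c₀‖ := norm_le_norm_add_norm_sub' c c₀
      _ ≤ ‖c₀‖ + 1 := by rw [← dist_eq_norm]; gcongr; exact hc
  exact ((continuous_parametric_integral_of_continuous (by fun_prop)
    (isCompact_closedBall 0 _)).continuousAt).congr hrestrict

lemma measurable_integral_comp_add {Ω : Type*} [MeasurableSpace Ω] {m : Ω → Measure E}
    (hm : Measurable m) (hloc : ∀ ω, IsLocallyFiniteMeasure (m ω)) {x : Ω → E}
    (hx : Measurable x) (hφ : Continuous φ) (hφc : HasCompactSupport φ) :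
    Measurable fun ω => ∫ y, φ (y + x ω) ∂(m ω) := by
  have hcont : ∀ ω, Continuous fun c => ∫ y, φ (y + c) ∂(m ω) := fun ω =>
    have := hloc ω; continuous_integral_comp_add (m ω) hφ hφc
  -- `m` is a kernel from `Ω` to `E`; no finiteness is needed for measurability of its integrals
  have hmeas : ∀ c : E, Measurable fun ω => ∫ y, φ (y + c) ∂(m ω) := fun c =>
    ((hφ.comp (continuous_add_const c)).measurable.stronglyMeasurable.integral_kernel
      (κ := ⟨m, hm⟩)).measurable
  exact (measurable_uncurry_of_continuous_of_measurable hcont hmeas).comp (hx.prodMk measurable_id)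

lemma eventually_forall_abs_comp_integral_comp_add_sub_le (hφ : Continuous φ) {K : ℝ}
    (hK : tsupport φ ⊆ closedBall 0 K) {g : ℝ → ℝ} (hg : Continuous g) (L : ℝ) (A : ℝ≥0)
    {ε : ℝ} (hε : 0 < ε) :
    ∀ᶠ δ in 𝓝[>] 0, ∀ (m : Measure E) [IsLocallyFiniteMeasure m], m (closedBall 0 (K + L)) ≤ A →
      ∀ c c' : E, ‖c‖ ≤ L → ‖c'‖ ≤ L → dist c c' < δ →
        |g (∫ y, φ (y + c) ∂m) - g (∫ y, φ (y + c') ∂m)| ≤ ε := by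
  have hφc : HasCompactSupport φ := (isCompact_closedBall 0 K).of_isClosed_subset
    (isClosed_tsupport φ) hK
  obtain ⟨M, hM⟩ := hφ.bounded_above_of_compact_support hφc
  have hM₀ : 0 ≤ M := (norm_nonneg _).trans (hM 0)
  obtain ⟨θ, hθ, hgθ⟩ := Metric.uniformContinuousOn_iff.1
    ((isCompact_closedBall (0 : ℝ) (M * A)).uniformContinuousOn_of_continuous hg.continuousOn)
    ε hε
  obtain ⟨δ, hδ, hφδ⟩ := Metric.uniformContinuous_iff.1
    (hφc.uniformContinuous_of_continuous hφ) (θ / (A + 1)) (by positivity)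
  filter_upwards [Ioo_mem_nhdsGT hδ] with δ' hδ' m _ hmA c c' hc hc' hcc'
  have hfin : m (closedBall 0 (K + L)) < ∞ := hmA.trans_lt ENNReal.coe_lt_top
  have hmA' : m.real (closedBall 0 (K + L)) ≤ A := ENNReal.toReal_le_coe_of_le_coe hmA
  have hvanish : ∀ c : E, ‖c‖ ≤ L → ∀ y ∉ closedBall 0 (K + L), φ (y + c) = 0 :=
    fun c hc y hy => apply_add_eq_zero_of_notMem_closedBall hK hc hy
  have hbound : ∀ c : E, ‖c‖ ≤ L → ∫ y, φ (y + c) ∂m ∈ closedBall 0 (M * A) := fun c hc =>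
    mem_closedBall_zero_iff.2 <| (norm_integral_le_of_forall_notMem_eq_zero hfin (hvanish c hc)
      fun y _ => hM _).trans (mul_le_mul_of_nonneg_left hmA' hM₀)
  have hintegrable : ∀ c : E, Integrable (fun y => φ (y + c)) m := fun c =>
    (hφ.comp (continuous_add_const c)).integrable_of_hasCompactSupport
      (hφc.comp_homeomorph (Homeomorph.addRight c))
  have hclose : dist (∫ y, φ (y + c) ∂m) (∫ y, φ (y + c') ∂m) < θ := by
    rw [dist_eq_norm, ← integral_sub (hintegrable c) (hintegrable c')]
    calc ‖∫ y, φ (y + c) - φ (y + c') ∂m‖ ≤ θ / (A + 1) * m.real (closedBall 0 (K + L)) :=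
          norm_integral_le_of_forall_notMem_eq_zero hfin
            (fun y hy => by rw [hvanish c hc y hy, hvanish c' hc' y hy, sub_self])
            fun y _ => (hφδ (by rw [dist_add_left]; exact hcc'.trans hδ'.2)).le
      _ ≤ θ / (A + 1) * A := by gcongr
      _ < θ := by
          rw [div_mul_eq_mul_div, div_lt_iff₀ (by positivity)]
          nlinarith
  rw [← Real.dist_eq]
  exact (hgθ _ (hbound c hc) _ (hbound c' hc') hclose).le

lemma abs_integral_comp_integral_comp_add_sub_sum_le {Ω : Type*} [MeasurableSpace Ω]
    (P : Measure Ω) [IsProbabilityMeasure P] {m : Ω → Measure E} (hm : Measurable m)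
    (hloc : ∀ ω, IsLocallyFiniteMeasure (m ω)) {x : Ω → E} (hx : Measurable x)
    (hφ : Continuous φ) (hφc : HasCompactSupport φ) (g : ℝ →ᵇ ℝ) {C : Set E}
    (hC : MeasurableSet C) {A : ℝ≥0} {R δ ε : ℝ} (hε : 0 ≤ ε)
    (hmod : ∀ (m' : Measure E) [IsLocallyFiniteMeasure m'], m' C ≤ A →
      ∀ c c' : E, ‖c‖ ≤ R + 1 → ‖c'‖ ≤ R + 1 → dist c c' < δ →
        |g (∫ y, φ (y + c) ∂m') - g (∫ y, φ (y + c') ∂m')| ≤ ε)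
    (hδ : δ ≤ 1) {t : Finset E} (ρ : PartitionOfUnity t E (closedBall 0 R))
    (ht : ∀ p ∈ t, p ∈ closedBall (0 : E) R) (hρ : ρ.IsSubordinate fun p => ball (p : E) δ) :
    |∫ ω, g (∫ y, φ (y + x ω) ∂(m ω)) ∂P
        - ∑ p : t, ∫ ω, g (∫ y, φ (y + p) ∂(m ω)) * ρ p (x ω) ∂P|
      ≤ ε + 2 * ‖g‖ * (P.real {ω | R < ‖x ω‖} + P.real {ω | (A : ℝ≥0∞) ≤ m ω C}) := by
  have hI : ∀ {x : Ω → E}, Measurable x → Measurable fun ω => g (∫ y, φ (y + x ω) ∂(m ω)) :=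
    fun hx => g.continuous.measurable.comp (measurable_integral_comp_add hm hloc hx hφ hφc)
  have hT : MeasurableSet ({ω | R < ‖x ω‖} ∪ {ω | (A : ℝ≥0∞) ≤ m ω C}) :=
    (measurableSet_lt measurable_const hx.norm).union
      (measurableSet_le measurable_const ((Measure.measurable_coe hC).comp hm))
  refine (ρ.abs_integral_sub_sum_integral_mul_le P hρ (fun p => (p : E))
    (F := fun ω c => g (∫ y, φ (y + c) ∂(m ω))) (hI hx).aestronglyMeasurable
    (fun p => ((hI measurable_const).mul
      ((ρ p).continuous.measurable.comp hx)).aestronglyMeasurable)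
    (fun ω c => g.norm_coe_le_norm _) hε hT fun ω hω => ?_).trans ?_
  · simp only [Set.mem_union, Set.mem_ofPred_eq, not_or, not_lt, not_le] at hω
    refine ⟨mem_closedBall_zero_iff.2 hω.1, fun p c hc => ?_⟩
    have := hloc ω
    have hp : ‖(p : E)‖ ≤ R := mem_closedBall_zero_iff.1 (ht p p.2)
    refine hmod (m ω) hω.2.le c p ?_ (by linarith) (mem_ball.1 hc)
    calc ‖c‖ ≤ ‖(p : E)‖ + ‖c - p‖ := norm_le_norm_add_norm_sub' c p
      _ ≤ R + 1 := by rw [← dist_eq_norm]; linarith [mem_ball.1 hc]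
  · gcongr
    exact measureReal_union_le _ _

end Translate

/-- if the pairs `(μ_t, X_t)` of random locally finite measures and random
variables converge jointly, in the sense of expectations of bounded continuous functionals,
to `(ν, Y)`, and first moments of the masses of compact sets are uniformly bounded, then the
randomly translated integrals converge as well. -/
theorem random_measure_translation_continuity
    {Ω : Type*} [MeasurableSpace Ω] (P : Measure Ω) [IsProbabilityMeasure P]
    (μ : ℝ → Ω → Measure ℝ) (X : ℝ → Ω → ℝ)
    (ν : Ω → Measure ℝ) (Y : Ω → ℝ)
    (hμloc : ∀ t ω, IsLocallyFiniteMeasure (μ t ω))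
    (hνloc : ∀ ω, IsLocallyFiniteMeasure (ν ω))
    (hμmeas : ∀ t, Measurable (μ t)) (hXmeas : ∀ t, Measurable (X t))
    (hνmeas : Measurable ν) (hYmeas : Measurable Y)
    (hconv : ∀ (f h : BoundedContinuousFunction ℝ ℝ) (φ : ℝ → ℝ),
      Continuous φ → HasCompactSupport φ →
      Tendsto (fun t : ℝ => ∫ ω, f (∫ y, φ y ∂(μ t ω)) * h (X t ω) ∂P) atTop
        (𝓝 (∫ ω, f (∫ y, φ y ∂(ν ω)) * h (Y ω) ∂P)))
    (hbound : ∀ C : Set ℝ, IsCompact C →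
      (∃ M : ℝ≥0∞, M ≠ ⊤ ∧ ∀ t : ℝ, (∫⁻ ω, μ t ω C ∂P) ≤ M) ∧ (∫⁻ ω, ν ω C ∂P) < ⊤)
    (φ : ℝ → ℝ) (hφ : Continuous φ) (hφc : HasCompactSupport φ)
    (g : BoundedContinuousFunction ℝ ℝ) :
    Tendsto (fun t : ℝ => ∫ ω, g (∫ y, φ (y + X t ω) ∂(μ t ω)) ∂P) atTop
      (𝓝 (∫ ω, g (∫ y, φ (y + Y ω) ∂(ν ω)) ∂P)) := by
  refine tendsto_of_forall_eventually_dist_le fun ε hε => ?_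
  set η := ε / (1 + 4 * ‖g‖)
  have hη : 0 < η := by positivity
  have hηε : ∀ a b, a ≤ η → b ≤ η → η + 2 * ‖g‖ * (a + b) ≤ ε := fun a b ha hb => by
    calc η + 2 * ‖g‖ * (a + b) ≤ η + 2 * ‖g‖ * (η + η) := by gcongr
      _ = ε := by simp only [η]; field_simp; ring
  obtain ⟨R, hXR, hYR⟩ := exists_eventually_measureReal_lt_norm_le P hXmeas hYmeas
    (fun h => by simpa using hconv 1 h φ hφ hφc) hη
  obtain ⟨K, hK⟩ := hφc.isBounded.subset_closedBall 0
  set C := closedBall (0 : ℝ) (K + (R + 1))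
  have hCmeas : ∀ {m : Ω → Measure ℝ}, Measurable m → AEMeasurable (fun ω => m ω C) P :=
    fun hm => ((Measure.measurable_coe measurableSet_closedBall).comp hm).aemeasurable
  obtain ⟨⟨M, hM, hμM⟩, hνM⟩ := hbound C (isCompact_closedBall 0 _)
  obtain ⟨A, hAμ, hAν⟩ := ((eventually_forall_measureReal_le_le P (fun t => hCmeas (hμmeas t))
    hM hμM hη).and (eventually_forall_measureReal_le_le P (fun (_ : Unit) => hCmeas hνmeas)
    hνM.ne (fun _ => le_rfl) hη)).exists
  obtain ⟨δ, hmod, hδ⟩ := ((eventually_forall_abs_comp_integral_comp_add_sub_le hφ hK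
    g.continuous (R + 1) A hη).and (Ioc_mem_nhdsGT one_pos)).exists
  obtain ⟨s, ρ, hs, hρ⟩ :=
    (isCompact_closedBall (0 : ℝ) R).exists_partitionOfUnity_isSubordinate_ball hδ.1
  refine ⟨fun t => ∑ p : s, ∫ ω, g (∫ y, φ (y + p) ∂(μ t ω)) * ρ p (X t ω) ∂P,
    ∑ p : s, ∫ ω, g (∫ y, φ (y + p) ∂(ν ω)) * ρ p (Y ω) ∂P,
    tendsto_finsetSum _ fun p _ => hconv g (ρ.toBoundedContinuousFunction p) _
      (hφ.comp (continuous_add_const _)) (hφc.comp_homeomorph (Homeomorph.addRight _)), ?_, ?_⟩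
  · filter_upwards [hXR] with t ht
    exact (abs_integral_comp_integral_comp_add_sub_sum_le P (hμmeas t) (hμloc t) (hXmeas t) hφ hφc
      g measurableSet_closedBall hη.le hmod hδ.2 ρ hs hρ).trans (hηε _ _ ht (hAμ t))
  · exact (abs_integral_comp_integral_comp_add_sub_sum_le P hνmeas hνloc hYmeas hφ hφc
      g measurableSet_closedBall hη.le hmod hδ.2 ρ hs hρ).trans (hηε _ _ hYR (hAν ()))
end

section
/- Let v : [0,∞) → [0,∞) be measurable with ∫₀^∞ y·e^{√2·y}·v(y) dy < ∞. Fix r ≥ 0 and x > 0. Then lim_{t→∞} (t^{3/2}·e^{−√2·x}/√(2π(t−r)))·∫₀^∞ v(y)·e^{√2·y}·e^{−(y − x + (3/(2√2))·log t)²/(2(t−r))}·(1 − e^{−2·y·x/(t−r)}) dy = √(2/π)·x·e^{−√2·x}·∫₀^∞ y·e^{√2·y}·v(y) dy. -/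
/-!
Dominated convergence. After pulling out `e^{√2 y} v(y)`, the integrand times `t^{3/2}` is
`(t/(t-r))^{3/2} / √(2π) · e^{-(y - x + c log t)² / (2(t-r))} · (t-r)(1 - e^{-2yx/(t-r)})`.
For fixed `y` the Gaussian factor tends to `1` since `(log t)² / t → 0`, and the last factor tends
to `2yx`, giving the pointwise limit `√(2/π) x y e^{√2 y} v(y)`. Since `1 - e^{-u} ≤ u`, the
integrand is eventually bounded by a constant multiple of `y e^{√2 y} |v(y)|`, which is integrable.
-/

open MeasureTheory Filter Topology Real

lemma tendsto_mul_one_sub_exp_neg_div_atTop (a : ℝ) :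
    Tendsto (fun s : ℝ => s * (1 - exp (-a / s))) atTop (𝓝 a) := by
  -- `s * (exp (-a / s) - 1)` is a difference quotient of `h ↦ exp (-(a * h))` at `0`
  have hderiv : HasDerivAt (fun h : ℝ => exp (-(a * h))) (-a) 0 := by
    simpa using ((hasDerivAt_id (0 : ℝ)).const_mul a).neg.exp
  have hslope := ((hasDerivAt_iff_tendsto_slope.1 hderiv).comp
    (tendsto_inv_atTop_nhdsGT_zero.mono_right (nhdsWithin_mono _ fun _ h => ne_of_gt h))).neg
  rw [neg_neg] at hslope
  refine hslope.congr fun s => ?_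
  simp only [Function.comp, slope_def_field, sub_zero, mul_zero, neg_zero, exp_zero, neg_div]
  rw [div_inv_eq_mul, mul_comm a]
  ring_nf

lemma mul_one_sub_exp_neg_div_le (a : ℝ) {s : ℝ} (hs : 0 < s) : s * (1 - exp (-a / s)) ≤ a := by
  have := one_sub_le_exp_neg (a / s)
  rw [neg_div]
  calc s * (1 - exp (-(a / s))) ≤ s * (a / s) := by gcongr; linarith
    _ = a := mul_div_cancel₀ a hs.ne'

lemma tendsto_sub_const_atTop (r : ℝ) : Tendsto (fun t : ℝ => t - r) atTop atTop := by
  simpa [sub_eq_add_neg] using tendsto_atTop_add_const_right atTop (-r) tendsto_id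

lemma tendsto_div_sub_const_atTop (r : ℝ) : Tendsto (fun t : ℝ => t / (t - r)) atTop (𝓝 1) := by
  have := ((tendsto_sub_const_atTop r).const_div_atTop r).const_add 1
  rw [add_zero] at this
  refine this.congr' ?_
  filter_upwards [eventually_gt_atTop r] with t ht
  field_simp [(sub_pos.2 ht).ne']
  ring

lemma tendsto_sq_add_mul_log_div_mul_add_atTop (b c d e : ℝ) (hd : d ≠ 0) :
    Tendsto (fun t : ℝ => (b + c * log t) ^ 2 / (d * t + e)) atTop (𝓝 0) := by
  have h n := tendsto_pow_log_div_mul_add_atTop d e n hd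
  have := (((h 0).const_mul (b ^ 2)).add ((h 1).const_mul (2 * b * c))).add
    ((h 2).const_mul (c ^ 2))
  simp only [mul_zero, add_zero] at this
  refine this.congr fun t => ?_
  ring

/-- With `b = y - x + (3 / (2√2)) log t` and `a = 2yx`, this is the factor multiplying
`e^{√2 y} v(y)` in the integrand of `t^{3/2} ψ(r, t, x + m(t))`. -/
noncomputable def scaledKilledKernel (r b c a t : ℝ) : ℝ :=
  t ^ ((3 : ℝ) / 2) / √(2 * π * (t - r)) * exp (-(b + c * log t) ^ 2 / (2 * (t - r))) *
    (1 - exp (-a / (t - r)))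

lemma scaledKilledKernel_eq {r t : ℝ} (ht : 0 < t) (hrt : r < t) (b c a : ℝ) :
    scaledKilledKernel r b c a t = (t / (t - r)) ^ ((3 : ℝ) / 2) / √(2 * π) *
      exp (-(b + c * log t) ^ 2 / (2 * (t - r))) * ((t - r) * (1 - exp (-a / (t - r)))) := by
  have hs : 0 < t - r := sub_pos.2 hrt
  have h32 : (t - r) ^ ((3 : ℝ) / 2) = (t - r) * √(t - r) := by
    rw [sqrt_eq_rpow, ← rpow_one_add' hs.le (by norm_num)]
    norm_num
  have : 0 < √(t - r) := sqrt_pos.2 hs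
  rw [scaledKilledKernel, div_rpow ht.le hs.le, h32, sqrt_mul (by positivity)]
  field_simp

lemma tendsto_scaledKilledKernel (r b c a : ℝ) :
    Tendsto (scaledKilledKernel r b c a) atTop (𝓝 (a / √(2 * π))) := by
  have hratio := (tendsto_div_sub_const_atTop r).rpow_const (p := (3 : ℝ) / 2) (Or.inl one_ne_zero)
  have hgauss : Tendsto (fun t => exp (-(b + c * log t) ^ 2 / (2 * (t - r)))) atTop (𝓝 1) := by
    have := ((tendsto_sq_add_mul_log_div_mul_add_atTop b c 2 (-(2 * r)) two_ne_zero).neg).rexp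
    rw [neg_zero, exp_zero] at this
    refine this.congr fun t => ?_
    ring_nf
  have hkill := (tendsto_mul_one_sub_exp_neg_div_atTop a).comp (tendsto_sub_const_atTop r)
  have := ((hratio.div_const (√(2 * π))).mul hgauss).mul hkill
  rw [one_rpow, one_div, mul_one, inv_mul_eq_div] at this
  refine this.congr' ?_
  filter_upwards [eventually_gt_atTop 0, eventually_gt_atTop r] with t ht hrt
  exact (scaledKilledKernel_eq ht hrt b c a).symm

lemma eventually_abs_scaledKilledKernel_le (r c : ℝ) :
    ∀ᶠ t in atTop, ∀ b a, 0 ≤ a → |scaledKilledKernel r b c a t| ≤ 2 * a / √(2 * π) := by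
  have hratio := (tendsto_div_sub_const_atTop r).rpow_const (p := (3 : ℝ) / 2) (Or.inl one_ne_zero)
  rw [one_rpow] at hratio
  filter_upwards [eventually_gt_atTop 0, eventually_gt_atTop r,
    hratio.eventually_lt_const one_lt_two] with t ht hrt hratio_le b a ha
  have hs : 0 < t - r := sub_pos.2 hrt
  have hgauss : exp (-(b + c * log t) ^ 2 / (2 * (t - r))) ≤ 1 :=
    exp_le_one_iff.2 (div_nonpos_of_nonpos_of_nonneg (neg_nonpos.2 (sq_nonneg _)) (by positivity))
  have hkill : 0 ≤ (t - r) * (1 - exp (-a / (t - r))) :=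
    mul_nonneg hs.le <| sub_nonneg.2 <| exp_le_one_iff.2 <|
      div_nonpos_of_nonpos_of_nonneg (neg_nonpos.2 ha) hs.le
  rw [scaledKilledKernel_eq ht hrt, abs_of_nonneg (by positivity)]
  calc (t / (t - r)) ^ ((3 : ℝ) / 2) / √(2 * π) * exp (-(b + c * log t) ^ 2 / (2 * (t - r))) *
        ((t - r) * (1 - exp (-a / (t - r))))
      ≤ 2 / √(2 * π) * 1 * a := by
        gcongr
        exact mul_one_sub_exp_neg_div_le a hs
    _ = 2 * a / √(2 * π) := by ring

theorem psi_at_m_asymptotics_general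
    (v : ℝ → ℝ) (hv_meas : Measurable v)
    (hv_int : IntegrableOn (fun y => y * Real.exp (Real.sqrt 2 * y) * v y) (Set.Ioi 0))
    (r : ℝ) (x : ℝ) (hx : 0 < x) :
    Tendsto
      (fun t : ℝ =>
        (t ^ ((3 : ℝ) / 2) * Real.exp (-(Real.sqrt 2) * x) / Real.sqrt (2 * Real.pi * (t - r))) *
          ∫ y in Set.Ioi (0 : ℝ),
            v y * Real.exp (Real.sqrt 2 * y) *
              Real.exp (-((y - x + (3 / (2 * Real.sqrt 2)) * Real.log t) ^ 2) / (2 * (t - r))) *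
              (1 - Real.exp (-(2 * y * x) / (t - r))))
      atTop
      (𝓝 (Real.sqrt (2 / Real.pi) * x * Real.exp (-(Real.sqrt 2) * x) *
        ∫ y in Set.Ioi (0 : ℝ), y * Real.exp (Real.sqrt 2 * y) * v y)) := by
  set c := 3 / (2 * √2)
  set K := fun t y => scaledKilledKernel r (y - x) c (2 * y * x) t * (v y * exp (√2 * y))
  have hlim : ∀ y, Tendsto (K · y) atTop (𝓝 (2 * y * x / √(2 * π) * (v y * exp (√2 * y)))) :=
    fun y => (tendsto_scaledKilledKernel r (y - x) c (2 * y * x)).mul_const _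
  have hbound : ∀ᶠ t in atTop, ∀ᵐ y ∂volume.restrict (Set.Ioi 0),
      ‖K t y‖ ≤ 4 * x / √(2 * π) * ‖y * exp (√2 * y) * v y‖ := by
    filter_upwards [eventually_abs_scaledKilledKernel_le r c] with t hkernel
    refine (ae_restrict_iff' measurableSet_Ioi).2 (ae_of_all _ fun y (hy : 0 < y) => ?_)
    have := hkernel (y - x) (2 * y * x) (by positivity)
    simp only [K, norm_mul, norm_eq_abs, abs_of_pos hy, abs_of_pos (exp_pos _)]
    calc _ ≤ 2 * (2 * y * x) / √(2 * π) * (|v y| * exp (√2 * y)) := by gcongr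
      _ = _ := by ring
  have hmeas : ∀ t, AEStronglyMeasurable (K t) (volume.restrict (Set.Ioi 0)) := fun t =>
    Measurable.aestronglyMeasurable (by simp only [K, scaledKilledKernel]; fun_prop)
  have hdom := tendsto_integral_filter_of_dominated_convergence _ (.of_forall hmeas) hbound
    (hv_int.norm.const_mul _) (ae_of_all _ hlim)
  have hsqrt : √(2 / π) = 2 / √(2 * π) := by
    rw [eq_div_iff (by positivity), ← sqrt_mul (by positivity),
      show 2 / π * (2 * π) = 2 ^ 2 by field_simp, sqrt_sq zero_le_two]
  convert hdom.const_mul (exp (-√2 * x)) using 1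
  · ext t
    rw [← integral_const_mul, ← integral_const_mul]
    congr 1; ext y
    simp only [K, scaledKilledKernel]
    ring
  · rw [hsqrt, ← integral_const_mul, ← integral_const_mul]
    congr 2; ext y
    ring

/-- the large-time limit of `t^{3/2}·ψ(r,t,x+m(t))` for a general nonnegative
integrable density `v`, with limit `√(2/π)·x·e^{−√2·x}·∫₀^∞ y·e^{√2·y}·v(y) dy`. -/
theorem psi_at_m_asymptotics
    (v : ℝ → ℝ) (hv_meas : Measurable v) (hv_nonneg : ∀ y : ℝ, 0 ≤ y → 0 ≤ v y)
    (hv_int : IntegrableOn (fun y => y * Real.exp (Real.sqrt 2 * y) * v y) (Set.Ioi 0))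
    (r : ℝ) (hr : 0 ≤ r) (x : ℝ) (hx : 0 < x) :
    Tendsto
      (fun t : ℝ =>
        (t ^ ((3 : ℝ) / 2) * Real.exp (-(Real.sqrt 2) * x) / Real.sqrt (2 * Real.pi * (t - r))) *
          ∫ y in Set.Ioi (0 : ℝ),
            v y * Real.exp (Real.sqrt 2 * y) *
              Real.exp (-((y - x + (3 / (2 * Real.sqrt 2)) * Real.log t) ^ 2) / (2 * (t - r))) *
              (1 - Real.exp (-(2 * y * x) / (t - r))))
      atTop
      (𝓝 (Real.sqrt (2 / Real.pi) * x * Real.exp (-(Real.sqrt 2) * x) *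
        ∫ y in Set.Ioi (0 : ℝ), y * Real.exp (Real.sqrt 2 * y) * v y)) :=
  psi_at_m_asymptotics_general v hv_meas hv_int r x hx
end
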